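/- arXiv:0805.1442 — 2 statements merged into one kernel-verified Lean document; each statement's English description precedes it below -/
import Mathlib

section
/- For all x > 0, the function g(x) = 2x/(1+x) + (log(1+x))^2 - 2·log(1+x) is strictly positive. -/
lemma exp_neg_lt (t : ℝ) (ht : 0 < t) : Real.exp (-t) < 1 - t + t ^ 2 / 2 := by
  have key : StrictMonoOn (fun s : ℝ => 1 - s + s ^ 2 / 2 - Real.exp (-s)) (Set.Ici 0) := by
    apply strictMonoOn_of_deriv_pos (convex_Ici 0)
    · fun_prop
    · intro s hs
      rw [interior_Ici] at hs
      have hd : deriv (fun s : ℝ => 1 - s + s ^ 2 / 2 - Real.exp (-s)) s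
          = -1 + s + Real.exp (-s) := by
        have : HasDerivAt (fun s : ℝ => 1 - s + s ^ 2 / 2 - Real.exp (-s))
            (-1 + s + Real.exp (-s)) s := by
          have h1 : HasDerivAt (fun s : ℝ => -s) (-1) s := (hasDerivAt_id s).neg
          have h2 := h1.exp
          have h3 : HasDerivAt (fun s : ℝ => 1 - s + s ^ 2 / 2 - Real.exp (-s))
              (0 - 1 + (2 * s ^ 1 * 1) / 2 - Real.exp (-s) * (-1)) s := by
            exact (((hasDerivAt_const s (1:ℝ)).sub (hasDerivAt_id s)).add
              (((hasDerivAt_id s).pow 2).div_const 2)).sub h2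
          convert h3 using 1; ring
        exact this.deriv
      rw [hd]
      have hexp : -s + 1 < Real.exp (-s) := Real.add_one_lt_exp (neg_ne_zero.mpr (ne_of_gt hs))
      linarith
  have h0 : (fun s : ℝ => 1 - s + s ^ 2 / 2 - Real.exp (-s)) 0
      < (fun s : ℝ => 1 - s + s ^ 2 / 2 - Real.exp (-s)) t :=
    key (Set.self_mem_Ici) (Set.mem_Ici.2 ht.le) ht
  simp [Real.exp_zero] at h0
  linarith

theorem stmt_0 (x : ℝ) (hx : 0 < x) :
    0 < 2 * x / (1 + x) + (Real.log (1 + x)) ^ 2 - 2 * Real.log (1 + x) := by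
  set t := Real.log (1 + x) with htdef
  have hx1 : (0:ℝ) < 1 + x := by linarith
  have ht : 0 < t := Real.log_pos (by linarith)
  have hexp : Real.exp t = 1 + x := Real.exp_log hx1
  have hen : Real.exp (-t) = 1 / (1 + x) := by
    rw [Real.exp_neg, hexp]; ring
  have key := exp_neg_lt t ht
  have hfrac : 2 * x / (1 + x) = 2 - 2 * (1 / (1 + x)) := by
    field_simp; ring
  rw [hfrac, ← hen]
  nlinarith [key]
end

section
/- Fix m̄ > 0. Let (L_n, m_n) be sequences of positive integers with L_n → ∞ and m_n/L_n → m̄. For each n, let X_{n,1},…,X_{n,m_n} be i.i.d. random variables, each distributed as (1/L_n) times a sum of L_n i.i.d. Exp(1) random variables. Then for every ε ∈ (0,1), Pr(min_{1≤i≤m_n} X_{n,i} ≤ 1-ε) → 0 as n → ∞. -/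
/-!
A sum of `k` independent `Exp(1)` variables satisfies the lower-tail Chernoff bound
`P(S_k ≤ a k) ≤ (a e^{1-a})^k` for `0 < a ≤ 1`: apply Markov's inequality to `e^{-t S_k}` with
`t = 1/a - 1`, whose mean is `(1 + t)^{-k} = a^k`. For `a = 1 - ε` the base `a e^{1-a}` is
strictly below `1`, so a union bound over the `m_n` users gives
`P(min_i X_{n,i} ≤ 1 - ε) ≤ m_n (a e^{1-a})^{L_n}`, which tends to `0` because `m_n = O(L_n)`.
-/

open MeasureTheory ProbabilityTheory Filter Real Topology

open scoped ENNReal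

theorem mul_exp_one_sub_lt_one {a : ℝ} (ha : a ≠ 1) : a * exp (1 - a) < 1 := by
  have h : a < exp (a - 1) := by linarith [add_one_lt_exp (sub_ne_zero.mpr ha)]
  calc a * exp (1 - a) < exp (a - 1) * exp (1 - a) := by gcongr
    _ = 1 := by rw [← exp_add, sub_add_sub_cancel', sub_self, exp_zero]

theorem tendsto_natCast_mul_pow_of_tendsto_div {L m : ℕ → ℕ} {c r : ℝ}
    (hL : Tendsto L atTop atTop) (hm : Tendsto (fun n => (m n : ℝ) / L n) atTop (𝓝 c))
    (hr0 : 0 ≤ r) (hr1 : r < 1) :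
    Tendsto (fun n => (m n : ℝ) * r ^ L n) atTop (𝓝 0) := by
  have hLr : Tendsto (fun n => (L n : ℝ) * r ^ L n) atTop (𝓝 0) :=
    (tendsto_self_mul_const_pow_of_abs_lt_one (by rwa [abs_of_nonneg hr0])).comp hL
  have hprod := hm.mul hLr
  rw [mul_zero] at hprod
  refine hprod.congr' ?_
  filter_upwards [hL.eventually_ne_atTop 0] with n hn
  field_simp

theorem lintegral_pi_prod_eq_pow {ι E : Type*} [Fintype ι] [MeasurableSpace E]
    (μ : Measure E) [IsProbabilityMeasure μ] {f : E → ℝ≥0∞} (hf : Measurable f) :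
    ∫⁻ y, ∏ i, f (y i) ∂Measure.pi (fun _ : ι => μ) = (∫⁻ x, f x ∂μ) ^ Fintype.card ι := by
  rw [lintegral_prod_eq_prod_lintegral_of_indepFun Finset.univ (fun i (y : ι → E) => f (y i))
    (iIndepFun_pi (μ := fun _ : ι => μ) (X := fun _ => f) fun _ => hf.aemeasurable)
    (fun i => hf.comp (measurable_pi_apply i))]
  simp_rw [(measurePreserving_eval (fun _ : ι => μ) _).lintegral_comp hf]
  rw [Finset.prod_const, Finset.card_univ]

theorem lintegral_exp_neg_mul_expMeasure {r t : ℝ} (hr : 0 < r) (ht : -r < t) :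
    ∫⁻ x, ENNReal.ofReal (exp (-(t * x))) ∂expMeasure r = ENNReal.ofReal (r / (r + t)) := by
  have hrt : 0 < r + t := by linarith
  -- `r e^{-r x} e^{-t x}` is `r / (r + t)` times the density of `Exp(r + t)`.
  have hdensity : ∀ x, exponentialPDF r x * ENNReal.ofReal (exp (-(t * x)))
      = ENNReal.ofReal (r / (r + t)) * exponentialPDF (r + t) x := by
    intro x
    rcases le_or_gt 0 x with hx | hx
    · rw [exponentialPDF_of_nonneg hx, exponentialPDF_of_nonneg hx,
        ← ENNReal.ofReal_mul (by positivity), ← ENNReal.ofReal_mul (by positivity)]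
      congr 1
      field_simp
      rw [← exp_add]
      ring_nf
    · rw [exponentialPDF_of_neg hx, exponentialPDF_of_neg hx, zero_mul, mul_zero]
  have hpdf : ∀ s, Measurable (exponentialPDF s) := fun s =>
    (measurable_exponentialPDFReal s).ennreal_ofReal
  rw [show expMeasure r = volume.withDensity (exponentialPDF r) from rfl,
    lintegral_withDensity_eq_lintegral_mul _ (hpdf r) (by fun_prop)]
  simp only [Pi.mul_apply, hdensity]
  rw [lintegral_const_mul _ (hpdf _), lintegral_exponentialPDF_eq_one hrt, mul_one]

theorem lintegral_exp_neg_mul_sum_pi_expMeasure {ι : Type*} [Fintype ι] {r t : ℝ} (hr : 0 < r)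
    (ht : -r < t) :
    ∫⁻ y, ENNReal.ofReal (exp (-(t * ∑ i, y i))) ∂Measure.pi (fun _ : ι => expMeasure r)
      = ENNReal.ofReal (r / (r + t)) ^ Fintype.card ι := by
  have := isProbabilityMeasure_expMeasure hr
  simp_rw [Finset.mul_sum, ← Finset.sum_neg_distrib, exp_sum,
    ENNReal.ofReal_prod_of_nonneg fun _ _ => (exp_pos _).le]
  rw [lintegral_pi_prod_eq_pow _ (f := fun x => ENNReal.ofReal (exp (-(t * x)))) (by fun_prop),
    lintegral_exp_neg_mul_expMeasure hr ht]

theorem measure_pi_expMeasure_mean_le_le {ι : Type*} [Fintype ι] {a : ℝ} (ha0 : 0 < a)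
    (ha1 : a ≤ 1) :
    (Measure.pi fun _ : ι => expMeasure 1) {y | (∑ i, y i) / Fintype.card ι ≤ a}
      ≤ ENNReal.ofReal ((a * exp (1 - a)) ^ Fintype.card ι) := by
  set k := Fintype.card ι
  set t := 1 / a - 1 with ht
  have ht0 : 0 ≤ t := by rw [ht, sub_nonneg, le_div_iff₀ ha0, one_mul]; exact ha1
  have hta : t * a = 1 - a := by rw [ht]; field_simp
  set g : (ι → ℝ) → ℝ≥0∞ := fun y => ENNReal.ofReal (exp (-(t * ∑ i, y i)))
  set c := ENNReal.ofReal (exp (-((1 - a) * k)))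
  have hsum : ∀ y : ι → ℝ, (∑ i, y i) / k ≤ a → ∑ i, y i ≤ a * k := by
    intro y hy
    rcases (Nat.cast_nonneg (α := ℝ) k).eq_or_lt with hk | hk
    · have : IsEmpty ι := Fintype.card_eq_zero_iff.mp (by exact_mod_cast hk.symm)
      simp [← hk]
    · rwa [div_le_iff₀ hk] at hy
  have hsub : {y : ι → ℝ | (∑ i, y i) / k ≤ a} ⊆ {y | c ≤ g y} := by
    intro y hy
    refine ENNReal.ofReal_le_ofReal (exp_le_exp.mpr ?_)
    have := mul_le_mul_of_nonneg_left (hsum y hy) ht0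
    rw [← hta]
    linarith
  have hmean : ∫⁻ y, g y ∂Measure.pi (fun _ : ι => expMeasure 1) = ENNReal.ofReal a ^ k := by
    rw [lintegral_exp_neg_mul_sum_pi_expMeasure one_pos (by linarith), ht, add_sub_cancel,
      one_div_one_div]
  have hc0 : c ≠ 0 := (ENNReal.ofReal_pos.mpr (exp_pos _)).ne'
  calc (Measure.pi fun _ : ι => expMeasure 1) {y | (∑ i, y i) / k ≤ a}
      ≤ (Measure.pi fun _ : ι => expMeasure 1) {y | c ≤ g y} := measure_mono hsub
    _ ≤ ENNReal.ofReal a ^ k / c := by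
      rw [ENNReal.le_div_iff_mul_le (Or.inl hc0) (Or.inl ENNReal.ofReal_ne_top), mul_comm,
        ← hmean]
      exact mul_meas_ge_le_lintegral₀ (by fun_prop) c
    _ = ENNReal.ofReal ((a * exp (1 - a)) ^ k) := by
      rw [← ENNReal.ofReal_pow ha0.le, ← ENNReal.ofReal_div_of_pos (exp_pos _), div_eq_mul_inv,
        ← exp_neg, neg_neg, mul_pow, ← exp_nat_mul, mul_comm (k : ℝ)]

theorem measure_exists_le_le_card_mul_of_map_eq {Ω ι : Type*} [MeasurableSpace Ω] [Fintype ι]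
    {μ : Measure Ω} {ν : Measure ℝ} {X : ι → Ω → ℝ} (hX : ∀ i, Measurable (X i))
    (hlaw : ∀ i, μ.map (X i) = ν) (c : ℝ) :
    μ {ω | ∃ i, X i ω ≤ c} ≤ Fintype.card ι * ν (Set.Iic c) :=
  calc μ {ω | ∃ i, X i ω ≤ c} = μ (⋃ i, X i ⁻¹' Set.Iic c) := by congr 1; ext; simp
    _ ≤ ∑ i, μ (X i ⁻¹' Set.Iic c) := measure_iUnion_fintype_le _ _
    _ = ∑ _i : ι, ν (Set.Iic c) := Finset.sum_congr rfl fun i _ => by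
      rw [← hlaw i, Measure.map_apply (hX i) measurableSet_Iic]
    _ = Fintype.card ι * ν (Set.Iic c) := by simp

theorem stmt_7_general (mbar : ℝ)
    (L m : ℕ → ℕ)
    (hL : Tendsto (fun n => L n) atTop atTop)
    (hm : Tendsto (fun n => (m n : ℝ) / (L n : ℝ)) atTop (nhds mbar))
    (Ω : ℕ → Type*) [∀ n, MeasureSpace (Ω n)]
    (X : (n : ℕ) → Fin (m n) → Ω n → ℝ)
    (hmeas : ∀ n i, Measurable (X n i))
    (hlaw : ∀ n i, Measure.map (X n i) ℙ =
      Measure.map (fun y : Fin (L n) → ℝ => (∑ l, y l) / (L n : ℝ))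
        (Measure.pi fun _ => expMeasure 1))
    (ε : ℝ) (hε : ε ∈ Set.Ioo (0 : ℝ) 1) :
    Tendsto (fun n => ℙ {ω : Ω n | ∃ i, X n i ω ≤ 1 - ε}) atTop (nhds 0) := by
  obtain ⟨hε0, hε1⟩ := hε
  set r := (1 - ε) * exp (1 - (1 - ε))
  have hr0 : 0 ≤ r := mul_nonneg (by linarith) (exp_pos _).le
  have hr1 : r < 1 := mul_exp_one_sub_lt_one (by linarith)
  have hbound : ∀ n, ℙ {ω : Ω n | ∃ i, X n i ω ≤ 1 - ε} ≤ ENNReal.ofReal (m n * r ^ L n) := by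
    intro n
    have hchernoff := measure_pi_expMeasure_mean_le_le (ι := Fin (L n)) (a := 1 - ε)
      (by linarith) (by linarith)
    rw [Fintype.card_fin] at hchernoff
    refine (measure_exists_le_le_card_mul_of_map_eq (hmeas n) (hlaw n) (1 - ε)).trans ?_
    rw [Fintype.card_fin, Measure.map_apply (by fun_prop) measurableSet_Iic,
      ENNReal.ofReal_mul (Nat.cast_nonneg _), ENNReal.ofReal_natCast]
    exact mul_le_mul_right hchernoff _
  have hlim := ENNReal.tendsto_ofReal (tendsto_natCast_mul_pow_of_tendsto_div hL hm hr0 hr1)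
  rw [ENNReal.ofReal_zero] at hlim
  exact tendsto_of_tendsto_of_tendsto_of_le_of_le tendsto_const_nhds hlim (fun _ => zero_le)
    hbound

theorem stmt_7 (mbar : ℝ) (hmbar : 0 < mbar)
    (L m : ℕ → ℕ) (hLpos : ∀ n, 0 < L n) (hmpos : ∀ n, 0 < m n)
    (hL : Tendsto (fun n => L n) atTop atTop)
    (hm : Tendsto (fun n => (m n : ℝ) / (L n : ℝ)) atTop (nhds mbar))
    (Ω : ℕ → Type*) [∀ n, MeasureSpace (Ω n)]
    [∀ n, IsProbabilityMeasure (ℙ : Measure (Ω n))]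
    (X : (n : ℕ) → Fin (m n) → Ω n → ℝ)
    (hmeas : ∀ n i, Measurable (X n i))
    (hindep : ∀ n, iIndepFun (X n) ℙ)
    (hlaw : ∀ n i, Measure.map (X n i) ℙ =
      Measure.map (fun y : Fin (L n) → ℝ => (∑ l, y l) / (L n : ℝ))
        (Measure.pi fun _ => expMeasure 1))
    (ε : ℝ) (hε : ε ∈ Set.Ioo (0 : ℝ) 1) :
    Tendsto (fun n => ℙ {ω : Ω n | ∃ i, X n i ω ≤ 1 - ε}) atTop (nhds 0) :=
  stmt_7_general mbar L m hL hm Ω X hmeas hlaw ε hε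
end
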